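/- A nonzero R-module M is finitely embedded if and only if for any family {M_i}_{i∈I} of submodules of M, the intersection ∩_{i∈I} M_i is nonzero whenever the intersection of any finite number of the M_i is nonzero. -/

import Mathlib

universe u

/-- A linear map is a pure monomorphism if it is injective and remains injective after
tensoring with every `R`-module. -/
def IsPureMono (R : Type u) [CommRing R] {M N : Type u} [AddCommGroup M] [Module R M]
    [AddCommGroup N] [Module R N] (f : M →ₗ[R] N) : Prop :=
  Function.Injective f ∧
    ∀ (L : Type u) [AddCommGroup L] [Module R L], Function.Injective (LinearMap.rTensor L f)

/-- A module `D` is pure injective if every homomorphism into `D` extends along every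
pure monomorphism. -/
def IsPureInjective (R : Type u) [CommRing R] (D : Type u) [AddCommGroup D] [Module R D] :
    Prop :=
  ∀ (M N : Type u) [AddCommGroup M] [Module R M] [AddCommGroup N] [Module R N]
    (f : M →ₗ[R] N), IsPureMono R f → ∀ g : M →ₗ[R] D, ∃ h : N →ₗ[R] D, h ∘ₗ f = g

/-- A module is finitely embedded if it embeds into the injective envelope of a direct sum
of finitely many simple modules, i.e. into an injective module which is an essential
extension of a finitely generated semisimple submodule. -/
def FinitelyEmbedded (R : Type u) [CommRing R] (M : Type u) [AddCommGroup M] [Module R M] :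
    Prop :=
  ∃ E : ModuleCat.{u} R, Module.Injective R E ∧
    ∃ S : Submodule R E, IsSemisimpleModule R S ∧ S.FG ∧
      (∀ P : Submodule R E, P ≠ ⊥ → S ⊓ P ≠ ⊥) ∧
      ∃ f : M →ₗ[R] E, Function.Injective f


/-!
The right-hand side says that `M` is finitely cogenerated. A finitely generated semisimple module is
Artinian, hence finitely cogenerated, and finite cogeneration passes to essential extensions and
to submodules. Conversely, if `M` is finitely cogenerated then so is its injective hull `E`
(a maximal essential extension of `M` inside an injective module, which is a direct summand).
By Zorn, every nonzero submodule of `E` contains a simple one, so the socle of `E` is essential;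
and a finitely cogenerated semisimple module is Artinian, so the socle is finitely generated.
-/

open Submodule

section Essential

variable {R : Type*} [Ring R] {M : Type*} [AddCommGroup M] [Module R M]

def Submodule.IsEssential (N : Submodule R M) : Prop :=
  ∀ P : Submodule R M, P ≠ ⊥ → N ⊓ P ≠ ⊥

def Submodule.IsEssentialIn (N D : Submodule R M) : Prop :=
  N ≤ D ∧ ∀ P ≤ D, P ≠ ⊥ → N ⊓ P ≠ ⊥

namespace Submodule

theorem isEssentialIn_refl (N : Submodule R M) : N.IsEssentialIn N :=
  ⟨le_rfl, fun P hP hP0 => by rwa [inf_eq_right.2 hP]⟩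

theorem IsEssentialIn.trans {N D D' : Submodule R M} (h₁ : N.IsEssentialIn D)
    (h₂ : D.IsEssentialIn D') : N.IsEssentialIn D' :=
  ⟨h₁.1.trans h₂.1, fun P hP hP0 hNP => h₁.2 (D ⊓ P) inf_le_left (h₂.2 P hP hP0)
    (le_bot_iff.1 (hNP ▸ inf_le_inf_left N inf_le_right))⟩

theorem isEssentialIn_sSup {N : Submodule R M} {c : Set (Submodule R M)}
    (hc : IsChain (· ≤ ·) c) (hne : c.Nonempty) (h : ∀ D ∈ c, N.IsEssentialIn D) :
    N.IsEssentialIn (sSup c) := by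
  obtain ⟨D₀, hD₀⟩ := hne
  refine ⟨(h D₀ hD₀).1.trans (le_sSup hD₀), fun P hP hP0 hNP => ?_⟩
  obtain ⟨x, hxP, hx0⟩ := (Submodule.ne_bot_iff P).1 hP0
  obtain ⟨D, hD, hxD⟩ := (mem_sSup_of_directed ⟨D₀, hD₀⟩ hc.directedOn).1 (hP hxP)
  refine (h D hD).2 _ ((span_singleton_le_iff_mem x D).2 hxD) (by simpa using hx0) ?_
  exact le_bot_iff.1 (hNP ▸ inf_le_inf_left N ((span_singleton_le_iff_mem x P).2 hxP))

theorem exists_maximal_isEssentialIn (N : Submodule R M) : ∃ D, Maximal N.IsEssentialIn D := by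
  obtain ⟨D, -, hD⟩ := zorn_le_nonempty₀ {D | N.IsEssentialIn D}
    (fun c hcs hc D hD => ⟨sSup c, isEssentialIn_sSup hc ⟨D, hD⟩ hcs, fun _ => le_sSup⟩)
    N N.isEssentialIn_refl
  exact ⟨D, hD⟩

theorem exists_maximal_disjoint (D : Submodule R M) : ∃ C, Maximal (Disjoint D) C := by
  obtain ⟨C, -, hC⟩ := zorn_le_nonempty₀ {C | Disjoint D C}
    (fun c hcs hc _ _ => ⟨sSup c, hc.directedOn.disjoint_sSup_right.2 hcs, fun _ => le_sSup⟩)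
    ⊥ disjoint_bot_right
  exact ⟨C, hC⟩

theorem IsEssentialIn.isEssential_comap_subtype {N D : Submodule R M} (h : N.IsEssentialIn D) :
    (N.comap D.subtype).IsEssential := by
  intro P hP0 hNP
  have hmap : map D.subtype P ≠ ⊥ :=
    ((map_injective_of_injective D.injective_subtype).ne hP0).trans_eq (map_bot _)
  refine h.2 _ (map_subtype_le D P) hmap (le_bot_iff.1 ?_)
  calc N ⊓ map D.subtype P ≤ map D.subtype (N.comap D.subtype ⊓ P) := by
        rw [map_inf _ D.injective_subtype, map_comap_subtype]
        exact le_inf (le_inf (inf_le_right.trans (map_subtype_le D P)) inf_le_left) inf_le_right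
    _ = ⊥ := by rw [hNP, map_bot]

theorem IsEssential.map_isEssentialIn_range {N : Type*} [AddCommGroup N] [Module R N]
    {P : Submodule R M} (hP : P.IsEssential) {f : M →ₗ[R] N} (hf : Function.Injective f) :
    (P.map f).IsEssentialIn (LinearMap.range f) := by
  refine ⟨LinearMap.map_le_range, fun Q hQ hQ0 hPQ => ?_⟩
  refine hP (Q.comap f) (fun h0 => hQ0 ?_) (map_injective_of_injective hf ?_)
  · rw [← map_comap_eq_self hQ, h0, map_bot]
  · rw [map_inf _ hf, map_comap_eq_self hQ, hPQ, map_bot]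

theorem isEssential_map_mkQ_of_maximal_disjoint {D C : Submodule R M}
    (hC : Maximal (Disjoint D) C) : (D.map C.mkQ).IsEssential := by
  intro P hP0 hDP
  have hdisj : Disjoint D (P.comap C.mkQ) := by
    refine disjoint_def.2 fun x hxD hxP => disjoint_def.1 hC.1 x hxD ?_
    rw [← Quotient.mk_eq_zero]
    exact disjoint_def.1 (disjoint_iff.2 hDP) _ (mem_map_of_mem hxD) hxP
  have hle : P.comap C.mkQ ≤ (⊥ : Submodule R (M ⧸ C)).comap C.mkQ := by
    rw [comap_bot, ker_mkQ]
    exact hC.2 hdisj fun x hx => by simp [(Quotient.mk_eq_zero C).2 hx]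
  exact hP0 (le_bot_iff.1 ((comap_le_comap_iff_of_surjective C.mkQ_surjective).1 hle))

end Submodule

theorem LinearMap.injective_of_injective_comp_of_isEssential_range {N Q E : Type*}
    [AddCommGroup N] [Module R N] [AddCommGroup Q] [Module R Q] [AddCommGroup E] [Module R E]
    (j : N →ₗ[R] Q) (h : Q →ₗ[R] E) (hj : (range j).IsEssential)
    (hhj : Function.Injective (h ∘ₗ j)) : Function.Injective h := by
  rw [← ker_eq_bot]
  by_contra hk
  refine hj _ hk (eq_bot_iff.2 ?_)
  rintro _ ⟨⟨y, rfl⟩, hy⟩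
  rw [mem_bot, hhj (show h (j y) = h (j 0) by simpa using hy), map_zero]

end Essential

section InjectiveHull

variable {R : Type*} [Ring R] {M : Type*} [AddCommGroup M] [Module R M]

theorem Module.Injective.of_isCompl [Module.Injective R M] {D C : Submodule R M}
    (h : IsCompl D C) : Module.Injective R D :=
  ⟨fun _ _ _ _ _ _ f hf g => by
    obtain ⟨g', hg'⟩ := Module.Injective.out f hf (D.subtype ∘ₗ g)
    exact ⟨D.projectionOnto C h ∘ₗ g', fun x => by simp [hg', projectionOnto_apply_left]⟩⟩

theorem Submodule.exists_isCompl_of_forall_isEssentialIn_eq [Module.Injective R M] (D : Submodule R M)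
    (hD : ∀ D', D.IsEssentialIn D' → D' = D) : ∃ C, IsCompl D C := by
  obtain ⟨C, hC⟩ := exists_maximal_disjoint D
  set j : D →ₗ[R] M ⧸ C := C.mkQ ∘ₗ D.subtype
  have hj : Function.Injective j := by
    rw [← LinearMap.ker_eq_bot, LinearMap.ker_comp, ker_mkQ, ← disjoint_iff_comap_eq_bot]
    exact hC.1
  have hjess : (LinearMap.range j).IsEssential := by
    rw [LinearMap.range_comp, range_subtype]
    exact isEssential_map_mkQ_of_maximal_disjoint hC
  obtain ⟨h, hhj⟩ := Module.Injective.out j hj D.subtype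
  have hhj' : h ∘ₗ j = D.subtype := LinearMap.ext hhj
  have hh : Function.Injective h :=
    LinearMap.injective_of_injective_comp_of_isEssential_range j h hjess
      (hhj' ▸ D.injective_subtype)
  -- `h` embeds `M ⧸ C` into `M` as an essential extension of `D`, so its range is `D`.
  have hrange : LinearMap.range h = D := by
    refine hD _ ?_
    have := hjess.map_isEssentialIn_range hh
    rwa [← LinearMap.range_comp, hhj', range_subtype] at this
  refine ⟨C, hC.1, codisjoint_iff.2 (eq_top_iff.2 fun e _ => ?_)⟩
  have hd : h (C.mkQ e) ∈ D := hrange ▸ LinearMap.mem_range_self h _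
  have hjd : j ⟨_, hd⟩ = C.mkQ e := hh (hhj ⟨_, hd⟩)
  simpa using add_mem_sup hd ((Quotient.eq C).1 hjd.symm)

end InjectiveHull

theorem Module.exists_injective_isEssential_range (R : Type u) [Ring R] (M : Type u)
    [AddCommGroup M] [Module R M] :
    ∃ (E : Type u) (_ : AddCommGroup E) (_ : Module R E), Module.Injective R E ∧
      ∃ f : M →ₗ[R] E, Function.Injective f ∧ (LinearMap.range f).IsEssential := by
  let E₀ := CategoryTheory.Injective.under (ModuleCat.of R M)
  let ι : ModuleCat.of R M ⟶ E₀ := CategoryTheory.Injective.ι _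
  have hι : Function.Injective ι.hom :=
    (ModuleCat.mono_iff_injective ι).1 (CategoryTheory.Injective.ι_mono _)
  have : Module.Injective R E₀ :=
    Module.injective_module_of_injective_object R E₀
      (inj := inferInstanceAs (CategoryTheory.Injective E₀))
  obtain ⟨D, hD⟩ := (LinearMap.range ι.hom).exists_maximal_isEssentialIn
  obtain ⟨C, hC⟩ := D.exists_isCompl_of_forall_isEssentialIn_eq fun D' h =>
    le_antisymm (hD.2 (hD.1.trans h) h.1) h.1
  refine ⟨D, _, _, .of_isCompl hC, ι.hom.codRestrict D fun x => hD.1.1 ⟨x, rfl⟩,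
    fun x y hxy => hι (congrArg Subtype.val hxy), ?_⟩
  rw [LinearMap.range_codRestrict]
  exact hD.1.isEssential_comap_subtype

def Module.FinitelyCogenerated (R : Type*) (M : Type u) [Ring R] [AddCommGroup M] [Module R M] :
    Prop :=
  ∀ (ι : Type u) (N : ι → Submodule R M), (∀ s : Finset ι, (⨅ i ∈ s, N i) ≠ ⊥) → (⨅ i, N i) ≠ ⊥

namespace Module.FinitelyCogenerated

variable {R : Type*} [Ring R] {M N : Type u} [AddCommGroup M] [Module R M]
  [AddCommGroup N] [Module R N]

theorem of_isArtinian [IsArtinian R M] : FinitelyCogenerated R M := by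
  classical
  intro ι P hP
  obtain ⟨_, ⟨s, rfl⟩, hmin⟩ := IsArtinian.set_has_minimal
    (Set.range fun s : Finset ι => ⨅ i ∈ s, P i) ⟨_, ∅, rfl⟩
  have hle : ∀ j, ⨅ i ∈ s, P i ≤ P j := fun j => by
    have := hmin _ ⟨insert j s, rfl⟩
    simp only [Finset.iInf_insert] at this
    exact inf_eq_right.1 (inf_le_right.eq_of_not_lt this)
  exact fun h0 => hP s (le_bot_iff.1 (h0 ▸ le_iInf hle))

theorem of_injective (h : FinitelyCogenerated R N) (f : M →ₗ[R] N) (hf : Function.Injective f) :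
    FinitelyCogenerated R M := by
  intro ι P hP
  rcases isEmpty_or_nonempty ι with hι | hι
  · simpa [iInf_of_empty] using hP ∅
  have hmap : ∀ s : Finset ι, ⨅ i ∈ s, (P i).map f ≠ ⊥ := fun s =>
    ne_bot_of_le_ne_bot (((map_injective_of_injective hf).ne (hP s)).trans_eq (map_bot f))
      (le_iInf₂ fun i hi => map_mono (iInf₂_le i hi))
  refine fun h0 => h ι _ hmap ?_
  rw [← Submodule.map_iInf _ hf, h0, Submodule.map_bot]

theorem of_isEssential_range (h : FinitelyCogenerated R N) (f : N →ₗ[R] M)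
    (hf : Function.Injective f) (hess : (LinearMap.range f).IsEssential) :
    FinitelyCogenerated R M := by
  have hcomap : ∀ P : Submodule R M, P ≠ ⊥ → P.comap f ≠ ⊥ := fun P hP h0 =>
    hess P hP (by rw [← map_comap_eq, h0, Submodule.map_bot])
  intro ι P hP h0
  refine h ι (fun i => (P i).comap f) (fun s => ?_) ?_
  · simpa only [comap_iInf] using hcomap _ (hP s)
  · rw [← comap_iInf, h0, comap_bot, LinearMap.ker_eq_bot.2 hf]

theorem iInf_ne_bot_of_directed (h : FinitelyCogenerated R M) {ι : Type u} [Nonempty ι]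
    {P : ι → Submodule R M} (hdir : Directed (· ≥ ·) P) (hP : ∀ i, P i ≠ ⊥) : ⨅ i, P i ≠ ⊥ :=
  h ι P fun s h0 => by
    obtain ⟨j, hj⟩ := hdir.finset_le s
    exact hP j (le_bot_iff.1 (h0 ▸ le_iInf₂ hj))

theorem isAtomic (h : FinitelyCogenerated R M) : IsAtomic (Submodule R M) :=
  IsAtomic.of_isChain_bounded fun c hc hne hbot => by
    have : Nonempty c := hne.to_subtype
    exact ⟨⨅ D : c, D, h.iInf_ne_bot_of_directed
      (fun D D' => (hc.total D.2 D'.2).elim (fun h => ⟨D, le_rfl, h⟩) fun h => ⟨D', h, le_rfl⟩)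
      fun D h0 => hbot (h0 ▸ D.2), fun D hD => iInf_le (fun D : c => (D : Submodule R M)) ⟨D, hD⟩⟩

theorem isArtinian [IsSemisimpleModule R M] (h : FinitelyCogenerated R M) : IsArtinian R M := by
  refine ⟨wellFounded_iff_isEmpty_descending_chain.2 ⟨fun ⟨f, hf⟩ => ?_⟩⟩
  set g : ULift.{u} ℕ → Submodule R M := fun n => f n.down
  -- With `C` a complement of the intersection `K` of the chain, `f n = K ⊔ (C ⊓ f n)` by modularity,
  -- so the `C ⊓ f n` are nonzero while their intersection is `C ⊓ K = ⊥`.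
  obtain ⟨C, hC⟩ := exists_isCompl (⨅ n, g n)
  have hanti : Antitone f := antitone_nat_of_succ_le fun n => (hf n).le
  refine h.iInf_ne_bot_of_directed (P := fun n => C ⊓ g n)
    (fun i j => ⟨⟨max i.down j.down⟩, inf_le_inf_left C (hanti (le_max_left _ _)),
      inf_le_inf_left C (hanti (le_max_right _ _))⟩) (fun n h0 => (hf n.down).not_ge ?_)
    (by rw [← Submodule.inf_iInf, hC.symm.inf_eq_bot])
  calc f n.down = (⨅ m, g m) ⊔ C ⊓ f n.down := by
        rw [← sup_inf_assoc_of_le C (iInf_le g n), hC.sup_eq_top, top_inf_eq]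
    _ = ⨅ m, g m := by rw [h0, sup_bot_eq]
    _ ≤ f (n.down + 1) := iInf_le g ⟨n.down + 1⟩

end Module.FinitelyCogenerated

section Socle

variable (R : Type*) [Ring R] (M : Type*) [AddCommGroup M] [Module R M]

def Module.socle : Submodule R M :=
  sSup {m : Submodule R M | IsSimpleModule R m}

instance Module.isSemisimpleModule_socle : IsSemisimpleModule R (Module.socle R M) := by
  rw [Module.socle, sSup_eq_iSup]
  exact isSemisimpleModule_biSup_of_isSemisimpleModule_submodule fun m hm =>
    have : IsSimpleModule R m := hm
    inferInstance

variable {R M}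

theorem Module.socle_isEssential [IsAtomic (Submodule R M)] : (Module.socle R M).IsEssential :=
  fun P hP => by
    obtain ⟨A, hA, hAP⟩ := (eq_bot_or_exists_atom_le P).resolve_left hP
    exact ne_bot_of_le_ne_bot hA.1 (le_inf (le_sSup (isSimpleModule_iff_isAtom.2 hA)) hAP)

theorem Module.FinitelyCogenerated.socle_fg {M : Type u} [AddCommGroup M] [Module R M]
    (h : FinitelyCogenerated R M) : (Module.socle R M).FG := by
  have : IsArtinian R (Module.socle R M) :=
    (h.of_injective _ (Module.socle R M).injective_subtype).isArtinian
  exact Module.Finite.iff_fg.1 ((IsSemisimpleModule.finite_tfae.out 2 0).1 this)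

end Socle

section

variable {R : Type u} [CommRing R] {M : Type u} [AddCommGroup M] [Module R M]

theorem FinitelyEmbedded.finitelyCogenerated (h : FinitelyEmbedded R M) :
    Module.FinitelyCogenerated R M := by
  obtain ⟨E, -, S, _, hS, hess, f, hf⟩ := h
  have : Module.Finite R S := Module.Finite.iff_fg.2 hS
  exact (Module.FinitelyCogenerated.of_isArtinian.of_isEssential_range S.subtype
    S.injective_subtype (by rwa [range_subtype])).of_injective f hf

theorem Module.FinitelyCogenerated.finitelyEmbedded (h : FinitelyCogenerated R M) :
    FinitelyEmbedded R M := by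
  obtain ⟨E, _, _, hE, f, hf, hess⟩ := Module.exists_injective_isEssential_range R M
  have hEfc := h.of_isEssential_range f hf hess
  have := hEfc.isAtomic
  exact ⟨ModuleCat.of R E, hE, socle R E, inferInstance, hEfc.socle_fg, socle_isEssential, f, hf⟩

end

theorem finitelyEmbedded_iff_finite_intersection_general (R : Type u) [CommRing R] (M : Type u)
    [AddCommGroup M] [Module R M] :
    FinitelyEmbedded R M ↔
      ∀ (ι : Type u) (N : ι → Submodule R M),
        (∀ s : Finset ι, (⨅ i ∈ s, N i) ≠ ⊥) → (⨅ i, N i) ≠ ⊥ :=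
  ⟨FinitelyEmbedded.finitelyCogenerated, Module.FinitelyCogenerated.finitelyEmbedded⟩

theorem finitelyEmbedded_iff_finite_intersection (R : Type u) [CommRing R] (M : Type u)
    [AddCommGroup M] [Module R M] [Nontrivial M] :
    FinitelyEmbedded R M ↔
      ∀ (ι : Type u) (N : ι → Submodule R M),
        (∀ s : Finset ι, (⨅ i ∈ s, N i) ≠ ⊥) → (⨅ i, N i) ≠ ⊥ :=
  finitelyEmbedded_iff_finite_intersection_general R M
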